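/- arXiv:2605.25734 — 2 statements merged into one kernel-verified Lean document; each statement's English description precedes it below -/
import Mathlib

section
/- Let M = c · ββ^T where c ≠ 0 and β ∈ ℝ^q is a unit vector, and let M̂ be a symmetric matrix with ‖M̂ − M‖_op ≤ ε < |c|/2. Let v̂ be a unit-norm leading eigenvector of M̂ (eigenvector associated to the eigenvalue of largest absolute value). Then min(‖v̂ − β‖₂, ‖v̂ + β‖₂) ≤ 2√2 · ε / |c|. -/
open Matrix

/-- Euclidean norm on `Fin q → ℝ`. -/
noncomputable def enorm' {q : ℕ} (v : Fin q → ℝ) : ℝ := Real.sqrt (∑ i, v i ^ 2)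

/-- Spectral (operator) norm of a real square matrix. -/
noncomputable def opNorm' {q : ℕ} (A : Matrix (Fin q) (Fin q) ℝ) : ℝ :=
  ‖Matrix.toEuclideanCLM (𝕜 := ℝ) A‖

/-!
Write `t = ⟪v̂, β⟫`. Applied to `v̂`, the perturbation bound reads `‖λ v̂ - c t β‖ ≤ ε`; as `c t β`
lies on the line `ℝ β`, the distance `|λ| √(1 - t²)` from `λ v̂` to that line is at most `ε`.
A leading eigenvalue of a symmetric matrix bounds its operator norm, so
`|λ| ≥ ‖M̂ β‖ ≥ |c| - ε > |c| / 2`, whence `1 - t² ≤ 4 ε² / c²`. Finally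
`min (‖v̂ - β‖², ‖v̂ + β‖²) = 2 - 2 |t| ≤ 2 (1 - t²)`.
-/

open Module.End RealInnerProductSpace WithLp

theorem LinearMap.IsSymmetric.norm_apply_le_of_forall_hasEigenvalue {𝕜 E : Type*} [RCLike 𝕜]
    [NormedAddCommGroup E] [InnerProductSpace 𝕜 E] [FiniteDimensional 𝕜 E] {T : E →ₗ[𝕜] E}
    (hT : T.IsSymmetric) {μ₀ : 𝕜} (hμ₀ : ∀ μ, HasEigenvalue T μ → ‖μ‖ ≤ ‖μ₀‖) (x : E) :
    ‖T x‖ ≤ ‖μ₀‖ * ‖x‖ := by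
  set b := hT.eigenvectorBasis rfl
  rw [← b.repr.norm_map, ← b.repr.norm_map, EuclideanSpace.norm_eq, EuclideanSpace.norm_eq,
    ← abs_norm μ₀, ← Real.sqrt_sq_eq_abs, ← Real.sqrt_mul (sq_nonneg _), Finset.mul_sum]
  gcongr with i
  rw [← mul_pow, hT.eigenvectorBasis_apply_self_apply, norm_mul, RCLike.norm_ofReal]
  gcongr
  simpa using hμ₀ _ (hT.hasEigenvalue_eigenvalues rfl i)

theorem Matrix.smul_vecMulVec_mulVec {m n α : Type*} [Fintype n] [CommSemiring α]
    (c : α) (u : m → α) (v w : n → α) : (c • vecMulVec u v) *ᵥ w = (c * (v ⬝ᵥ w)) • u := by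
  rw [smul_mulVec, vecMulVec_mulVec, op_smul_eq_smul, smul_smul]

theorem Matrix.toEuclideanCLM_smul_vecMulVec {n : Type*} [Fintype n] [DecidableEq n] (c : ℝ)
    (u v : n → ℝ) (x : EuclideanSpace ℝ n) :
    toEuclideanCLM (𝕜 := ℝ) (c • vecMulVec u v) x = (c * ⟪toLp 2 v, x⟫) • toLp 2 u := by
  rw [EuclideanSpace.inner_eq_star_dotProduct]
  ext i
  simp only [ofLp_toEuclideanCLM, smul_vecMulVec_mulVec, PiLp.smul_apply, Pi.smul_apply,
    smul_eq_mul, star_trivial, dotProduct_comm v]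

theorem norm_toLp_eq_enorm' {q : ℕ} (v : Fin q → ℝ) :
    ‖(toLp 2 v : EuclideanSpace ℝ (Fin q))‖ = enorm' v := by
  simp [EuclideanSpace.norm_eq, enorm']

section Geometry

variable {E : Type*} [NormedAddCommGroup E] [InnerProductSpace ℝ E] {u w : E}

theorem norm_sq_sub_inner_sq_le (hw : ‖w‖ = 1) (x : E) (s : ℝ) :
    ‖x‖ ^ 2 - ⟪w, x⟫ ^ 2 ≤ ‖x - s • w‖ ^ 2 := by
  rw [norm_sub_sq_real, real_inner_smul_right, norm_smul, hw, mul_one, Real.norm_eq_abs, sq_abs,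
    real_inner_comm]
  nlinarith [sq_nonneg (s - ⟪x, w⟫)]

theorem sq_mul_one_sub_inner_sq_le (hu : ‖u‖ = 1) (hw : ‖w‖ = 1) {lam s ε : ℝ}
    (h : ‖lam • u - s • w‖ ≤ ε) : lam ^ 2 * (1 - ⟪w, u⟫ ^ 2) ≤ ε ^ 2 := by
  have := norm_sq_sub_inner_sq_le hw (lam • u) s
  rw [norm_smul, hu, mul_one, Real.norm_eq_abs, sq_abs, real_inner_smul_right] at this
  nlinarith [norm_nonneg (lam • u - s • w)]

theorem min_norm_sub_norm_add_sq_le (hu : ‖u‖ = 1) (hw : ‖w‖ = 1) :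
    min ‖u - w‖ ‖u + w‖ ^ 2 ≤ 2 * (1 - ⟪u, w⟫ ^ 2) := by
  have ht : |⟪u, w⟫| ≤ 1 := by simpa [hu, hw] using abs_real_inner_le_norm u w
  have hmin : 0 ≤ min ‖u - w‖ ‖u + w‖ := le_min (norm_nonneg _) (norm_nonneg _)
  rcases le_total 0 ⟪u, w⟫ with h | h
  · calc min ‖u - w‖ ‖u + w‖ ^ 2 ≤ ‖u - w‖ ^ 2 := by gcongr; exact min_le_left _ _
      _ = 2 - 2 * ⟪u, w⟫ := by rw [norm_sub_sq_real, hu, hw]; ring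
      _ ≤ 2 * (1 - ⟪u, w⟫ ^ 2) := by nlinarith [abs_le.mp ht]
  · calc min ‖u - w‖ ‖u + w‖ ^ 2 ≤ ‖u + w‖ ^ 2 := by gcongr; exact min_le_right _ _
      _ = 2 + 2 * ⟪u, w⟫ := by rw [norm_add_sq_real, hu, hw]; ring
      _ ≤ 2 * (1 - ⟪u, w⟫ ^ 2) := by nlinarith [abs_le.mp ht]

theorem min_norm_sub_norm_add_le_of_norm_sub_le (hu : ‖u‖ = 1) (hw : ‖w‖ = 1) {lam c ε : ℝ}
    (hc : c ≠ 0) (hres : ‖lam • u - (c * ⟪w, u⟫) • w‖ ≤ ε) (hlam : |c| ≤ 2 * |lam|) :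
    min ‖u - w‖ ‖u + w‖ ≤ 2 * √2 * ε / |c| := by
  have hε : 0 ≤ ε := (norm_nonneg _).trans hres
  have hsin := sq_mul_one_sub_inner_sq_le hu hw hres
  have hcos : 0 ≤ 1 - ⟪u, w⟫ ^ 2 := by
    nlinarith [min_norm_sub_norm_add_sq_le hu hw, sq_nonneg (min ‖u - w‖ ‖u + w‖)]
  have hlam2 : c ^ 2 ≤ 4 * lam ^ 2 := by nlinarith [sq_abs c, sq_abs lam, abs_nonneg c]
  refine le_of_sq_le_sq ?_ (by positivity)
  rw [div_pow, mul_pow, mul_pow, Real.sq_sqrt zero_le_two, sq_abs,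
    le_div_iff₀ (by positivity)]
  rw [real_inner_comm] at hsin
  calc min ‖u - w‖ ‖u + w‖ ^ 2 * c ^ 2 ≤ 2 * (1 - ⟪u, w⟫ ^ 2) * (4 * lam ^ 2) := by
        gcongr
        exact min_norm_sub_norm_add_sq_le hu hw
    _ ≤ 2 ^ 2 * 2 * ε ^ 2 := by nlinarith

end Geometry

/-- **Davis–Kahan-type perturbation bound for rank-one matrices.**
Let `M = c·ββᵀ` with `c ≠ 0` and `β` a unit vector, and let `M̂` be symmetric with
`‖M̂ − M‖_op ≤ ε < |c|/2`. If `v̂` is a unit leading eigenvector of `M̂`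
(eigenvector for the eigenvalue of largest absolute value), then
`min(‖v̂ − β‖, ‖v̂ + β‖) ≤ 2√2·ε/|c|`. -/
theorem rank_one_davis_kahan
    {q : ℕ} (c : ℝ) (hc : c ≠ 0) (β : Fin q → ℝ) (hβ : enorm' β = 1)
    (M Mhat : Matrix (Fin q) (Fin q) ℝ)
    (hM : M = c • vecMulVec β β)
    (hsym : Mhat.IsSymm)
    (ε : ℝ) (hε : opNorm' (Mhat - M) ≤ ε) (hεc : ε < |c| / 2)
    (vhat : Fin q → ℝ) (hvhat : enorm' vhat = 1)
    (lam : ℝ)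
    (heig : Mhat.mulVec vhat = lam • vhat)
    (hlead : ∀ (lam' : ℝ) (w : Fin q → ℝ), w ≠ 0 →
      Mhat.mulVec w = lam' • w → |lam'| ≤ |lam|) :
    min (enorm' (vhat - β)) (enorm' (vhat + β)) ≤ 2 * Real.sqrt 2 * ε / |c| := by
  set v : EuclideanSpace ℝ (Fin q) := toLp 2 vhat
  set b : EuclideanSpace ℝ (Fin q) := toLp 2 β
  set T := toEuclideanCLM (𝕜 := ℝ) Mhat
  have hv : ‖v‖ = 1 := (norm_toLp_eq_enorm' vhat).trans hvhat
  have hb : ‖b‖ = 1 := (norm_toLp_eq_enorm' β).trans hβ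
  have hres (x) : ‖T x - (c * ⟪b, x⟫) • b‖ ≤ ε * ‖x‖ :=
    calc ‖T x - (c * ⟪b, x⟫) • b‖ = ‖toEuclideanCLM (𝕜 := ℝ) (Mhat - M) x‖ := by
          rw [hM, map_sub, _root_.sub_apply, toEuclideanCLM_smul_vecMulVec]
      _ ≤ opNorm' (Mhat - M) * ‖x‖ := ContinuousLinearMap.le_opNorm _ x
      _ ≤ ε * ‖x‖ := by gcongr
  have hT : (toEuclideanLin Mhat).IsSymmetric :=
    isSymmetric_toEuclideanLin_iff.mpr (isHermitian_iff_isSymm.mpr hsym)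
  have hT_le (x) : ‖T x‖ ≤ ‖lam‖ * ‖x‖ := by
    refine hT.norm_apply_le_of_forall_hasEigenvalue (fun μ hμ => ?_) x
    obtain ⟨y, hy⟩ := hμ.exists_hasEigenvector
    exact hlead μ (ofLp y) (by simpa using hy.2) (congrArg ofLp hy.apply_eq_smul)
  have hlam : |c| ≤ 2 * |lam| := by
    have hcb : |c| ≤ ‖T b‖ + ‖T b - c • b‖ := by
      simpa [norm_smul, hb] using norm_le_norm_add_norm_sub (T b) (c • b)
    have hres_b : ‖T b - c • b‖ ≤ ε := by simpa [real_inner_self_eq_norm_sq, hb] using hres b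
    have hTb : ‖T b‖ ≤ |lam| := by simpa [hb] using hT_le b
    linarith
  have hTv : T v = lam • v := congrArg (toLp 2) heig
  have := min_norm_sub_norm_add_le_of_norm_sub_le hv hb hc (by simpa [hTv, hv] using hres v) hlam
  rwa [← norm_toLp_eq_enorm', ← norm_toLp_eq_enorm']
end

section
/- Let γ ∈ ℝ^q and let s ≥ ‖γ‖₀ (the number of nonzero entries of γ). Let Trunc_s(v) denote the hard-thresholding operator keeping the s largest-magnitude entries of v and zeroing the rest. Then for any v ∈ ℝ^q, ‖Trunc_s(v) − γ‖₂ ≤ 2‖v − γ‖₂. -/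
/-- **Hard-thresholding contraction bound.**
Let `γ ∈ ℝ^q` be `s`-sparse (`‖γ‖₀ ≤ s`) and let `Trunc_s(v)` keep the `s`
largest-magnitude entries of `v` (given by any set `S` of `s` coordinates such
that every kept entry dominates every dropped entry in magnitude, ties broken
arbitrarily) and zero out the rest. Then `‖Trunc_s(v) − γ‖₂ ≤ 2‖v − γ‖₂`. -/
theorem hard_thresholding_contraction
    {q : ℕ} (s : ℕ) (γ v : Fin q → ℝ)
    (hsparse : (Finset.univ.filter fun i => γ i ≠ 0).card ≤ s)
    (S : Finset (Fin q)) (hcard : S.card = min s q)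
    (hsel : ∀ i ∈ S, ∀ j ∉ S, |v j| ≤ |v i|) :
    enorm' ((fun i => if i ∈ S then v i else 0) - γ) ≤ 2 * enorm' (v - γ) := by
  classical
  set D : Finset (Fin q) := Sᶜ.filter (fun i => γ i ≠ 0) with hD
  set K : Finset (Fin q) := S.filter (fun j => γ j = 0) with hK
  -- cardinality: D.card ≤ K.card
  have hTcard : (Finset.univ.filter fun i => γ i ≠ 0).card ≤ S.card := by
    rw [hcard]
    exact le_min hsparse (le_trans (Finset.card_le_univ _) (by simp))
  have hsplitT : (S.filter (fun i => γ i ≠ 0)).card + D.card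
      = (Finset.univ.filter fun i => γ i ≠ 0).card := by
    rw [hD, ← Finset.card_union_of_disjoint, ← Finset.filter_union]
    · congr 1
      simp
    · exact Finset.disjoint_filter_filter (disjoint_compl_right)
  have hsplitS : (S.filter (fun i => γ i ≠ 0)).card + K.card = S.card := by
    rw [hK, add_comm]
    exact Finset.card_filter_add_card_filter_not _
  have hDK : D.card ≤ K.card := by omega
  -- key sum bound on dropped coordinates
  have hsumD : ∑ i ∈ D, (v i)^2 ≤ ∑ j ∈ K, (v j - γ j)^2 := by
    rcases D.eq_empty_or_nonempty with h | hDne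
    · rw [h]
      simp
      exact Finset.sum_nonneg fun j _ => sq_nonneg _
    have hKne : K.Nonempty := Finset.card_pos.mp (lt_of_lt_of_le (Finset.card_pos.mpr hDne) hDK)
    set c : ℝ := K.inf' hKne (fun j => (v j)^2) with hc
    have hc0 : 0 ≤ c := Finset.le_inf' hKne _ (fun j _ => sq_nonneg _)
    have h1 : ∑ i ∈ D, (v i)^2 ≤ D.card • c := by
      apply Finset.sum_le_card_nsmul
      intro i hi
      apply Finset.le_inf' hKne
      intro j hj
      have hiS : i ∉ S := by
        have := Finset.mem_filter.mp hi
        simpa using this.1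
      have hjS : j ∈ S := (Finset.mem_filter.mp hj).1
      have := hsel j hjS i hiS
      calc (v i)^2 = |v i|^2 := (sq_abs _).symm
        _ ≤ |v j|^2 := by gcongr
        _ = (v j)^2 := sq_abs _
    have h2 : (K.card : ℕ) • c ≤ ∑ j ∈ K, (v j)^2 :=
      Finset.card_nsmul_le_sum _ _ _ (fun j hj => Finset.inf'_le _ hj)
    have h3 : D.card • c ≤ K.card • c := by
      simp only [nsmul_eq_mul]
      exact mul_le_mul_of_nonneg_right (by exact_mod_cast hDK) hc0
    have h4 : ∑ j ∈ K, (v j)^2 = ∑ j ∈ K, (v j - γ j)^2 := by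
      apply Finset.sum_congr rfl
      intro j hj
      have : γ j = 0 := (Finset.mem_filter.mp hj).2
      rw [this, sub_zero]
    linarith
  -- assemble the squared bound
  have hA : ∑ i, ((if i ∈ S then v i else 0) - γ i)^2
      ≤ 4 * ∑ i, (v i - γ i)^2 := by
    have hsplit : ∑ i, ((if i ∈ S then v i else 0) - γ i)^2
        = ∑ i ∈ S, (v i - γ i)^2 + ∑ i ∈ Sᶜ, (γ i)^2 := by
      rw [← Finset.sum_add_sum_compl S]
      congr 1
      · exact Finset.sum_congr rfl (fun i hi => by rw [if_pos hi])
      · apply Finset.sum_congr rfl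
        intro i hi
        rw [if_neg (by simpa using hi)]
        ring
    have hDsum : ∑ i ∈ Sᶜ, (γ i)^2 = ∑ i ∈ D, (γ i)^2 := by
      rw [hD]
      exact (Finset.sum_filter_of_ne (fun x _ hx => by
        intro h0; exact hx (by rw [h0]; ring))).symm
    have hDbound : ∑ i ∈ D, (γ i)^2
        ≤ ∑ i ∈ D, (2*(v i)^2 + 2*(v i - γ i)^2) :=
      Finset.sum_le_sum (fun i _ => by nlinarith [sq_nonneg (v i + (v i - γ i))])
    have hdist : ∑ i ∈ D, (2*(v i)^2 + 2*(v i - γ i)^2)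
        = 2 * ∑ i ∈ D, (v i)^2 + 2 * ∑ i ∈ D, (v i - γ i)^2 := by
      rw [Finset.sum_add_distrib, Finset.mul_sum, Finset.mul_sum]
    have hKS : ∑ j ∈ K, (v j - γ j)^2 ≤ ∑ j ∈ S, (v j - γ j)^2 :=
      Finset.sum_le_sum_of_subset_of_nonneg (Finset.filter_subset _ _)
        (fun j _ _ => sq_nonneg _)
    have hDSc : ∑ i ∈ D, (v i - γ i)^2 ≤ ∑ i ∈ Sᶜ, (v i - γ i)^2 :=
      Finset.sum_le_sum_of_subset_of_nonneg (Finset.filter_subset _ _)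
        (fun j _ _ => sq_nonneg _)
    have hB : ∑ i ∈ S, (v i - γ i)^2 + ∑ i ∈ Sᶜ, (v i - γ i)^2
        = ∑ i, (v i - γ i)^2 := Finset.sum_add_sum_compl S _
    have hS0 : 0 ≤ ∑ i ∈ S, (v i - γ i)^2 := Finset.sum_nonneg fun i _ => sq_nonneg _
    have hSc0 : 0 ≤ ∑ i ∈ Sᶜ, (v i - γ i)^2 := Finset.sum_nonneg fun i _ => sq_nonneg _
    linarith
  -- conclude via square roots
  simp only [enorm', Pi.sub_apply]
  have hB0 : 0 ≤ ∑ i, (v i - γ i)^2 := Finset.sum_nonneg fun i _ => sq_nonneg _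
  calc Real.sqrt (∑ i, ((if i ∈ S then v i else 0) - γ i)^2)
      ≤ Real.sqrt (4 * ∑ i, (v i - γ i)^2) := Real.sqrt_le_sqrt hA
    _ = 2 * Real.sqrt (∑ i, (v i - γ i)^2) := by
        rw [Real.sqrt_mul (by norm_num), show Real.sqrt 4 = 2 by
          rw [show (4:ℝ) = 2^2 by norm_num, Real.sqrt_sq (by norm_num)]]
end
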